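/- For every nonnegative integer n, Σ_{k∈ℤ, k even} p₂(n − k²) − Σ_{k∈ℤ, k odd} p₂(n − k²) = p(n/2), where p₂(m) = 0 for m < 0 and p(n/2) is interpreted as 0 when n is odd. (Both sums are finite since only the k with k² ≤ n contribute.) -/

import Mathlib

/-- The partition number `p(n)`: the number of partitions of `n`. -/
noncomputable def partitionNumber (n : ℕ) : ℕ := Nat.card (Nat.Partition n)

/-- The bipartition number `p₂(n)`: the number of ordered pairs `(λ, μ)` of partitions
with `|λ| + |μ| = n`. -/
noncomputable def bipartitionNumber (n : ℕ) : ℕ :=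
  Nat.card {x : (Σ a : ℕ, Nat.Partition a) × (Σ b : ℕ, Nat.Partition b) // x.1.1 + x.2.1 = n}

/-- `p₂` extended to the integers, with value `0` at negative integers. -/
noncomputable def bipartitionNumberZ (m : ℤ) : ℤ :=
  if 0 ≤ m then (bipartitionNumber m.toNat : ℤ) else 0

/-!
By the finite form of Jacobi's triple product identity,
`∑_{|k| ≤ m} z^k q^{k²} [2m, m+k]_{q²} = ∏_{i<m} (1 + z q^{2i+1}) (1 + z⁻¹ q^{2i+1})`,
which follows by induction on `m` from the two `q`-Pascal rules. Take `z = -1` and `q = X`.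
Modulo `X^{2m+1}` every `X^{k²} [2m, m+k]_{X²}` may be replaced by `X^{k²} / (X²; X²)_∞`, that is,
by `X^{k²} P(X²)` where `P` is the partition generating function; this gives Gauss's identity
`θ₄(X) P(X²) ≡ (X; X²)_m²`. As `(X; X)_{2m} = (X; X²)_m (X²; X²)_m` and `P = 1 / (X; X)_∞`, it
rearranges to `θ₄(X) P(X)² ≡ P(X²)`, and the coefficient of `Xⁿ` on each side is one side of
the theorem, since `P(X)²` is the generating function of `p₂`.
-/

open PowerSeries Finset PowerSeries.WithPiTopology

section GaussBinom

variable {R : Type*} [CommRing R]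

def qPochhammer (q : R) (s : ℕ) : R := ∏ i ∈ range s, (1 - q ^ (i + 1))

theorem qPochhammer_zero (q : R) : qPochhammer q 0 = 1 := prod_range_zero _

theorem qPochhammer_succ (q : R) (s : ℕ) :
    qPochhammer q (s + 1) = qPochhammer q s * (1 - q ^ (s + 1)) :=
  prod_range_succ _ _

theorem qPochhammer_two_mul (q : R) (m : ℕ) :
    qPochhammer q (2 * m) = (∏ i ∈ range m, (1 - q ^ (2 * i + 1))) * qPochhammer (q ^ 2) m := by
  induction m with
  | zero => simp [qPochhammer]
  | succ m ih =>
    rw [show 2 * (m + 1) = 2 * m + 1 + 1 by ring, qPochhammer_succ, qPochhammer_succ, ih,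
      prod_range_succ, qPochhammer_succ]
    ring

-- The Gaussian binomial coefficient `[n, k]_q`, extended by `0` to `k ∉ [0, n]`.
def gaussBinom (q : R) : ℕ → ℤ → R
  | 0, k => if k = 0 then 1 else 0
  | n + 1, k => gaussBinom q n (k - 1) + q ^ k.toNat * gaussBinom q n k

theorem gaussBinom_succ (q : R) (n : ℕ) (k : ℤ) :
    gaussBinom q (n + 1) k = gaussBinom q n (k - 1) + q ^ k.toNat * gaussBinom q n k := rfl

theorem gaussBinom_eq_zero (q : R) {n : ℕ} {k : ℤ} (hk : k < 0 ∨ n < k) :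
    gaussBinom q n k = 0 := by
  induction n generalizing k with
  | zero => rw [gaussBinom, if_neg (by omega)]
  | succ n ih => rw [gaussBinom_succ, ih (by omega), ih (by omega), mul_zero, add_zero]

theorem gaussBinom_zero_right (q : R) (n : ℕ) : gaussBinom q n 0 = 1 := by
  induction n with
  | zero => simp [gaussBinom]
  | succ n ih => simp [gaussBinom_succ, ih, gaussBinom_eq_zero q (k := -1) (by omega)]

theorem gaussBinom_self (q : R) (n : ℕ) : gaussBinom q n n = 1 := by
  induction n with
  | zero => simp [gaussBinom]
  | succ n ih =>
    rw [gaussBinom_succ, gaussBinom_eq_zero q (k := (n + 1 : ℕ)) (by omega)]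
    simpa using ih

theorem gaussBinom_succ' (q : R) (n : ℕ) (k : ℤ) :
    gaussBinom q (n + 1) k =
      q ^ (n + 1 - k).toNat * gaussBinom q n (k - 1) + gaussBinom q n k := by
  induction n generalizing k with
  | zero =>
    rcases eq_or_ne k 0 with rfl | h0
    · simp [gaussBinom]
    rcases eq_or_ne k 1 with rfl | h1
    · simp [gaussBinom]
    · simp [gaussBinom, h0, h1, sub_eq_zero]
  | succ n ih =>
    have hexp : (n + 1 - (k - 1)).toNat = ((n + 1 : ℕ) + 1 - k).toNat := by omega
    rw [gaussBinom_succ q (n + 1) k, ← hexp]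
    have h1 := ih (k - 1)
    have h2 := ih k
    have h3 := gaussBinom_succ q n (k - 1)
    have h4 := gaussBinom_succ q n k
    by_cases hk : 1 ≤ k ∧ k ≤ n + 1
    · have hpow : q ^ k.toNat * q ^ (n + 1 - k).toNat
          = q ^ (n + 1 - (k - 1)).toNat * q ^ (k - 1).toNat := by
        rw [← pow_add, ← pow_add]; congr 1; omega
      linear_combination h1 + q ^ k.toNat * h2 - q ^ (n + 1 - (k - 1)).toNat * h3 - h4
        + gaussBinom q n (k - 1) * hpow
    · rw [gaussBinom_eq_zero q (n := n) (k := k - 1) (by omega)] at h2 h3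
      linear_combination h1 + q ^ k.toNat * h2 - q ^ (n + 1 - (k - 1)).toNat * h3 - h4

theorem gaussBinom_mul_qPochhammer (q : R) (j l : ℕ) :
    gaussBinom q (j + l) j * qPochhammer q j * qPochhammer q l = qPochhammer q (j + l) := by
  induction h : j + l generalizing j l with
  | zero =>
    obtain ⟨rfl, rfl⟩ : j = 0 ∧ l = 0 := by omega
    simp [gaussBinom_zero_right, qPochhammer_zero]
  | succ n ih =>
    rcases j with _ | j
    · simp [gaussBinom_zero_right, qPochhammer_zero, ← h]
    rcases l with _ | l
    · obtain rfl : j = n := by omega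
      rw [gaussBinom_self, one_mul, qPochhammer_zero, mul_one]
    have e1 := ih j (l + 1) (by omega)
    have e2 := ih (j + 1) l (by omega)
    have hpow : q ^ (j + 1) * q ^ (l + 1) = q ^ (n + 1) := by rw [← pow_add, h]
    rw [show ((j + 1 : ℕ) : ℤ) = j + 1 by push_cast; ring, gaussBinom_succ, add_sub_cancel_right,
      show (j + 1 : ℤ).toNat = j + 1 by omega, qPochhammer_succ q j, qPochhammer_succ q l,
      qPochhammer_succ q n]
    push_cast at e2
    rw [qPochhammer_succ] at e1 e2
    linear_combination (1 - q ^ (j + 1)) * e1 + q ^ (j + 1) * (1 - q ^ (l + 1)) * e2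
      - qPochhammer q n * hpow

theorem gaussBinom_central_succ (Q : R) (m : ℕ) (k : ℤ) :
    gaussBinom Q (2 * (m + 1)) ((m + 1 : ℕ) + k) =
      (1 + Q ^ (2 * m + 1)) * gaussBinom Q (2 * m) (m + k)
        + Q ^ (m + 1 - k).toNat * gaussBinom Q (2 * m) (m + (k - 1))
        + Q ^ (m + (k + 1)).toNat * gaussBinom Q (2 * m) (m + (k + 1)) := by
  have hQ : Q ^ (m + (k + 1)).toNat * Q ^ (m - k).toNat * gaussBinom Q (2 * m) (m + k)
      = Q ^ (2 * m + 1) * gaussBinom Q (2 * m) (m + k) := by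
    by_cases hk : -m ≤ k ∧ k ≤ m
    · rw [← pow_add]; congr 2; omega
    · rw [gaussBinom_eq_zero Q (by omega), mul_zero, mul_zero]
  rw [show 2 * (m + 1) = 2 * m + 1 + 1 by ring, gaussBinom_succ, gaussBinom_succ',
    gaussBinom_succ']
  push_cast
  rw [show (m : ℤ) + 1 + k - 1 - 1 = m + (k - 1) by ring,
    show (m : ℤ) + 1 + k - 1 = m + k by ring,
    show (2 * (m : ℤ) + 1 - (m + k)).toNat = (m + 1 - k).toNat by omega,
    show (m : ℤ) + 1 + k = m + (k + 1) by ring,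
    show (2 * (m : ℤ) + 1 - (m + (k + 1))).toNat = (m - k).toNat by omega]
  linear_combination hQ

def jacobiTerm (z : Rˣ) (q : R) (m : ℕ) (k : ℤ) : R :=
  ((z ^ k : Rˣ) : R) * q ^ k.natAbs ^ 2 * gaussBinom (q ^ 2) (2 * m) (m + k)

variable (z : Rˣ) (q : R)

theorem jacobiTerm_eq_zero {m : ℕ} {k : ℤ} (hk : m < k.natAbs) : jacobiTerm z q m k = 0 := by
  rw [jacobiTerm, gaussBinom_eq_zero _ (by omega), mul_zero]

theorem jacobiTerm_succ (m : ℕ) (k : ℤ) :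
    jacobiTerm z q (m + 1) k = (1 + q ^ (2 * (2 * m + 1))) * jacobiTerm z q m k
      + q ^ (2 * m + 1) * z * jacobiTerm z q m (k - 1)
      + q ^ (2 * m + 1) * ↑z⁻¹ * jacobiTerm z q m (k + 1) := by
  have h₁ : q ^ k.natAbs ^ 2 * (q ^ 2) ^ (m + 1 - k).toNat
      * gaussBinom (q ^ 2) (2 * m) (m + (k - 1))
      = q ^ (2 * m + 1) * q ^ (k - 1).natAbs ^ 2 * gaussBinom (q ^ 2) (2 * m) (m + (k - 1)) := by
    by_cases hk : k ≤ m + 1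
    · rw [← pow_mul, ← pow_add, ← pow_add]
      congr 2
      zify
      push_cast [Int.toNat_of_nonneg (show 0 ≤ (m : ℤ) + 1 - k by omega), sq_abs]
      ring
    · rw [gaussBinom_eq_zero _ (n := 2 * m) (by omega), mul_zero, mul_zero]
  have h₂ : q ^ k.natAbs ^ 2 * (q ^ 2) ^ (m + (k + 1)).toNat
      * gaussBinom (q ^ 2) (2 * m) (m + (k + 1))
      = q ^ (2 * m + 1) * q ^ (k + 1).natAbs ^ 2 * gaussBinom (q ^ 2) (2 * m) (m + (k + 1)) := by
    by_cases hk : -(m + 1) ≤ k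
    · rw [← pow_mul, ← pow_add, ← pow_add]
      congr 2
      zify
      push_cast [Int.toNat_of_nonneg (show 0 ≤ (m : ℤ) + (k + 1) by omega), sq_abs]
      ring
    · rw [gaussBinom_eq_zero _ (n := 2 * m) (by omega), mul_zero, mul_zero]
  have hz₁ : ((z ^ k : Rˣ) : R) = z * ((z ^ (k - 1) : Rˣ) : R) := by
    rw [← Units.val_mul, ← zpow_one_add, add_sub_cancel]
  have hz₂ : ((z ^ k : Rˣ) : R) = ↑z⁻¹ * ((z ^ (k + 1) : Rˣ) : R) := by
    rw [← Units.val_mul, ← zpow_neg_one, ← zpow_add]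
    congr 2
    ring
  simp only [jacobiTerm]
  rw [gaussBinom_central_succ]
  linear_combination ((z ^ k : Rˣ) : R) * (h₁ + h₂)
    + q ^ (2 * m + 1) * q ^ (k - 1).natAbs ^ 2 * gaussBinom (q ^ 2) (2 * m) (m + (k - 1)) * hz₁
    + q ^ (2 * m + 1) * q ^ (k + 1).natAbs ^ 2 * gaussBinom (q ^ 2) (2 * m) (m + (k + 1)) * hz₂

theorem hasFiniteSupport_jacobiTerm (m : ℕ) : (jacobiTerm z q m).HasFiniteSupport :=
  (Set.finite_Icc (-m : ℤ) m).subset fun k hk => by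
    by_contra h
    exact hk (jacobiTerm_eq_zero z q (by simp only [Set.mem_Icc] at h; omega))

theorem finsum_jacobiTerm (m : ℕ) :
    ∑ᶠ k, jacobiTerm z q m k =
      ∏ i ∈ range m, (1 + z * q ^ (2 * i + 1)) * (1 + ↑z⁻¹ * q ^ (2 * i + 1)) := by
  induction m with
  | zero =>
    rw [finsum_eq_single _ 0 fun k hk => jacobiTerm_eq_zero z q (by omega)]
    simp [jacobiTerm, gaussBinom]
  | succ m ih =>
    have hf := hasFiniteSupport_jacobiTerm z q m
    have hf₁ : (fun k => jacobiTerm z q m (k - 1)).HasFiniteSupport :=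
      hf.comp_of_injective (sub_left_injective (b := 1))
    have hf₂ : (fun k => jacobiTerm z q m (k + 1)).HasFiniteSupport :=
      hf.comp_of_injective (add_left_injective 1)
    have hs₁ : ∑ᶠ k, jacobiTerm z q m (k - 1) = ∑ᶠ k, jacobiTerm z q m k :=
      finsum_comp_equiv (Equiv.subRight 1)
    have hs₂ : ∑ᶠ k, jacobiTerm z q m (k + 1) = ∑ᶠ k, jacobiTerm z q m k :=
      finsum_comp_equiv (Equiv.addRight 1)
    simp_rw [jacobiTerm_succ]
    rw [finsum_add_distrib (by fun_prop) (by fun_prop),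
      finsum_add_distrib (by fun_prop) (by fun_prop),
      ← mul_finsum' _ _ hf, ← mul_finsum' _ _ hf₁, ← mul_finsum' _ _ hf₂,
      hs₁, hs₂, ih, prod_range_succ]
    linear_combination
      -(∏ i ∈ range m, (1 + z * q ^ (2 * i + 1)) * (1 + ↑z⁻¹ * q ^ (2 * i + 1)))
        * q ^ (2 * (2 * m + 1)) * Units.mul_inv z

end GaussBinom

section SModEq

variable {A B : Type*} [CommRing A] [CommRing B]

theorem SModEq.span_pow_of_le {x a b : A} {M N : ℕ} (h : a ≡ b [SMOD Ideal.span {x ^ N}])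
    (hMN : M ≤ N) : a ≡ b [SMOD Ideal.span {x ^ M}] :=
  h.mono (Ideal.span_singleton_le_span_singleton.mpr (pow_dvd_pow x hMN))

theorem SModEq.pow_mul_span_pow {x a b : A} {N : ℕ} (h : a ≡ b [SMOD Ideal.span {x ^ N}]) (M : ℕ) :
    x ^ M * a ≡ x ^ M * b [SMOD Ideal.span {x ^ (M + N)}] := by
  rw [SModEq.sub_mem, Ideal.mem_span_singleton, ← mul_sub, pow_add] at *
  exact mul_dvd_mul_left _ h

theorem SModEq.map_span_singleton {x a b : A} (h : a ≡ b [SMOD Ideal.span {x}]) (f : A →+* B) :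
    f a ≡ f b [SMOD Ideal.span {f x}] := by
  rw [SModEq.sub_mem, Ideal.mem_span_singleton, ← map_sub] at *
  exact map_dvd f h

end SModEq

section Truncation

variable {R : Type*} [CommRing R]

theorem coeff_eq_of_smodEq {f g : R⟦X⟧} {N d : ℕ} (h : f ≡ g [SMOD Ideal.span {X ^ N}])
    (hd : d < N) : coeff d f = coeff d g := by
  rw [SModEq.sub_mem, Ideal.mem_span_singleton, X_pow_dvd_iff] at h
  simpa [sub_eq_zero] using h d hd

theorem HasProd.prod_range_smodEq [TopologicalSpace R] [T2Space R] {f : ℕ → R⟦X⟧} {a : R⟦X⟧}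
    (h : HasProd f a) {N s : ℕ} (hf : ∀ i, s ≤ i → f i ≡ 1 [SMOD Ideal.span {X ^ N}]) :
    ∏ i ∈ range s, f i ≡ a [SMOD Ideal.span {X ^ N}] := by
  have hstab : ∀ t, s ≤ t →
      ∏ i ∈ range t, f i ≡ ∏ i ∈ range s, f i [SMOD Ideal.span {X ^ N}] := by
    intro t hst
    rw [← prod_range_mul_prod_Ico f hst]
    simpa using (SModEq.refl (∏ i ∈ range s, f i)).mul
      (SModEq.prod fun i hi => hf i (mem_Ico.mp hi).1)
  rw [SModEq.sub_mem, Ideal.mem_span_singleton, X_pow_dvd_iff]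
  intro d hd
  have hlim := ((tendsto_iff_coeff_tendsto _ _ _ _).mp h.tendsto_prod_nat) d
  have hconst : ∀ᶠ t in Filter.atTop,
      coeff d (∏ i ∈ range t, f i) = coeff d (∏ i ∈ range s, f i) :=
    Filter.eventually_atTop.mpr ⟨s, fun t hst => coeff_eq_of_smodEq (hstab t hst) hd⟩
  rw [map_sub, sub_eq_zero]
  exact tendsto_nhds_unique (tendsto_const_nhds.congr' (hconst.mono fun t ht => ht.symm)) hlim

end Truncation

noncomputable def partitionSeries : ℤ⟦X⟧ := PowerSeries.mk fun n => (partitionNumber n : ℤ)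

theorem hasProd_partitionSeries :
    HasProd (fun i => ∑' j : ℕ, (X : ℤ⟦X⟧) ^ ((i + 1) * j)) partitionSeries := by
  have h : partitionSeries =
      PowerSeries.mk fun n => (#(Nat.Partition.restricted n fun _ => True) : ℤ) := by
    ext n
    simp [partitionSeries, Nat.Partition.restricted, partitionNumber, Nat.card_eq_fintype_card]
  simpa [h] using Nat.Partition.hasProd_powerSeriesMk_card_restricted ℤ (fun _ => True)

theorem qPochhammer_X_mul_partitionSeries_smodEq_one (s : ℕ) :
    qPochhammer X s * partitionSeries ≡ 1 [SMOD Ideal.span {(X : ℤ⟦X⟧) ^ (s + 1)}] := by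
  set g : ℕ → ℤ⟦X⟧ := fun i => ∑' j : ℕ, X ^ ((i + 1) * j)
  have hgeom : ∀ i, g i * (1 - X ^ (i + 1)) = 1 := fun i => by
    simp_rw [g, pow_mul]
    exact tsum_pow_mul_one_sub_of_constantCoeff_eq_zero (by simp)
  have hone : ∀ i, s ≤ i → g i ≡ 1 [SMOD Ideal.span {X ^ (s + 1)}] := by
    intro i hi
    rw [SModEq.sub_mem, Ideal.mem_span_singleton]
    exact (pow_dvd_pow X (by omega : s + 1 ≤ i + 1)).trans
      (⟨g i, by linear_combination hgeom i⟩ : X ^ (i + 1) ∣ g i - 1)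
  have hprod : qPochhammer X s * ∏ i ∈ range s, g i = 1 := by
    rw [qPochhammer, ← prod_mul_distrib]
    exact prod_eq_one fun i _ => by rw [mul_comm, hgeom]
  have h := (SModEq.refl (qPochhammer X s)).mul (hasProd_partitionSeries.prod_range_smodEq hone)
  rwa [hprod, SModEq.comm] at h

theorem qPochhammer_X_sq_mul_expand_smodEq_one (s : ℕ) :
    qPochhammer (X ^ 2) s * expand 2 two_ne_zero partitionSeries
      ≡ 1 [SMOD Ideal.span {(X : ℤ⟦X⟧) ^ (2 * (s + 1))}] := by
  simpa [qPochhammer, map_prod, pow_mul] using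
    (qPochhammer_X_mul_partitionSeries_smodEq_one s).map_span_singleton
      (expand 2 two_ne_zero : ℤ⟦X⟧ →ₐ[ℤ] ℤ⟦X⟧).toRingHom

theorem gaussBinom_X_sq_smodEq (j l : ℕ) :
    gaussBinom (X ^ 2) (j + l) j
      ≡ expand 2 two_ne_zero partitionSeries
        [SMOD Ideal.span {(X : ℤ⟦X⟧) ^ (2 * min j l + 2)}] := by
  have hinv : ∀ i, min j l ≤ i → qPochhammer (X ^ 2) i * expand 2 two_ne_zero partitionSeries
      ≡ 1 [SMOD Ideal.span {(X : ℤ⟦X⟧) ^ (2 * min j l + 2)}] := fun i hi =>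
    (qPochhammer_X_sq_mul_expand_smodEq_one i).span_pow_of_le (by omega)
  have hj := SModEq.idealQuotientMk.mp (hinv j (min_le_left j l))
  have hl := SModEq.idealQuotientMk.mp (hinv l (min_le_right j l))
  have hjl := SModEq.idealQuotientMk.mp (hinv (j + l) (by omega))
  have hprod := congrArg (Ideal.Quotient.mk (Ideal.span {(X : ℤ⟦X⟧) ^ (2 * min j l + 2)}))
    (gaussBinom_mul_qPochhammer (X ^ 2) j l)
  simp only [map_mul, map_one] at hj hl hjl hprod
  rw [SModEq.idealQuotientMk]
  set π := Ideal.Quotient.mk (Ideal.span {(X : ℤ⟦X⟧) ^ (2 * min j l + 2)})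
  set p := π (expand 2 two_ne_zero partitionSeries)
  set g := π (gaussBinom (X ^ 2) (j + l) j)
  -- `g = g (e_j p) (e_l p) = (g e_j e_l) p² = e_{j+l} p · p = p`, where `e_i = (X²; X²)_i`
  linear_combination
    (-g) * hj + (-g * π (qPochhammer (X ^ 2) j) * p) * hl + p ^ 2 * hprod + p * hjl

-- The truncation to `|k| ≤ m` of `θ₄(X) = ∑_{k ∈ ℤ} (-1)^k X^{k²}`.
noncomputable def truncatedTheta (m : ℕ) : ℤ⟦X⟧ :=
  ∑ k ∈ Icc (-m : ℤ) m, (((-1) ^ k : ℤ⟦X⟧ˣ) : ℤ⟦X⟧) * X ^ k.natAbs ^ 2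

theorem jacobiTerm_X_smodEq {m : ℕ} {k : ℤ} (hk : k.natAbs ≤ m) :
    jacobiTerm (-1) X m k ≡ (((-1) ^ k : ℤ⟦X⟧ˣ) : ℤ⟦X⟧) * X ^ k.natAbs ^ 2
      * expand 2 two_ne_zero partitionSeries [SMOD Ideal.span {(X : ℤ⟦X⟧) ^ (2 * m + 1)}] := by
  obtain ⟨j, hj⟩ : ∃ j : ℕ, (j : ℤ) = m + k := ⟨(m + k).toNat, by omega⟩
  obtain ⟨l, hl⟩ : ∃ l : ℕ, (l : ℤ) = m - k := ⟨(m - k).toNat, by omega⟩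
  have hjl : 2 * m = j + l := by omega
  have hmod : 2 * m + 1 ≤ k.natAbs ^ 2 + (2 * min j l + 2) := by -- `(|k| - 1)² ≥ 0`
    have : min j l + k.natAbs = m := by omega
    nlinarith
  rw [jacobiTerm, mul_assoc, mul_assoc,
    show gaussBinom (X ^ 2) (2 * m) (m + k) = gaussBinom (X ^ 2) (j + l) j by rw [hjl, hj]]
  exact SModEq.rfl.mul (((gaussBinom_X_sq_smodEq j l).pow_mul_span_pow _).span_pow_of_le hmod)

theorem truncatedTheta_mul_expand_smodEq (m : ℕ) :
    truncatedTheta m * expand 2 two_ne_zero partitionSeries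
      ≡ (∏ i ∈ range m, (1 - X ^ (2 * i + 1))) ^ 2
        [SMOD Ideal.span {(X : ℤ⟦X⟧) ^ (2 * m + 1)}] := by
  have hsum : ∑ᶠ k, jacobiTerm (-1) (X : ℤ⟦X⟧) m k = ∑ k ∈ Icc (-m : ℤ) m, jacobiTerm (-1) X m k :=
    finsum_eq_sum_of_support_subset _ fun k hk => by
      by_contra h
      exact hk (jacobiTerm_eq_zero _ _ (by simp only [coe_Icc, Set.mem_Icc] at h; omega))
  have h := finsum_jacobiTerm (-1) (X : ℤ⟦X⟧) m
  simp only [hsum, Units.val_neg, Units.val_one, inv_neg, inv_one] at h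
  have hprod : ∏ i ∈ range m, (1 + -1 * X ^ (2 * i + 1)) * (1 + -1 * X ^ (2 * i + 1))
      = (∏ i ∈ range m, (1 - X ^ (2 * i + 1) : ℤ⟦X⟧)) ^ 2 := by
    rw [← prod_pow]
    exact prod_congr rfl fun i _ => by ring
  rw [truncatedTheta, ← hprod, ← h, sum_mul]
  exact SModEq.sum fun k hk => (jacobiTerm_X_smodEq (by simp only [mem_Icc] at hk; omega)).symm

theorem truncatedTheta_mul_partitionSeries_sq_smodEq (m : ℕ) :
    truncatedTheta m * partitionSeries ^ 2
      ≡ expand 2 two_ne_zero partitionSeries [SMOD Ideal.span {(X : ℤ⟦X⟧) ^ (2 * m + 1)}] := by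
  rw [SModEq.idealQuotientMk]
  have hθ := SModEq.idealQuotientMk.mp (truncatedTheta_mul_expand_smodEq m)
  have hP := SModEq.idealQuotientMk.mp (qPochhammer_X_mul_partitionSeries_smodEq_one (2 * m))
  have hP₂ := SModEq.idealQuotientMk.mp
    ((qPochhammer_X_sq_mul_expand_smodEq_one m).span_pow_of_le (by omega : 2 * m + 1 ≤ 2 * (m + 1)))
  have hsplit := congrArg (Ideal.Quotient.mk (Ideal.span {(X : ℤ⟦X⟧) ^ (2 * m + 1)}))
    (qPochhammer_two_mul (X : ℤ⟦X⟧) m)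
  simp only [map_mul, map_pow, map_one] at hθ hP hP₂ hsplit ⊢
  set π := Ideal.Quotient.mk (Ideal.span {(X : ℤ⟦X⟧) ^ (2 * m + 1)})
  set t := π (truncatedTheta m)
  set h := π (∏ i ∈ range m, (1 - X ^ (2 * i + 1)))
  set p := π partitionSeries
  set p₂ := π (expand 2 two_ne_zero partitionSeries)
  set e := π (qPochhammer (X ^ 2) m)
  set E := π (qPochhammer X (2 * m))
  -- `t p² = (t p₂) e p² = (h p)² e = (E p) (h p) = h p = (E p) p₂ = p₂`, as `e p₂ = 1`, `E = h e`
  linear_combination (-t * p ^ 2) * hP₂ + e * p ^ 2 * hθ - h * p ^ 2 * hsplit + h * p * hP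
    - h * p * hP₂ - p * p₂ * hsplit + p₂ * hP

theorem sum_neg_one_zpow_mul_eq_sum_even_sub_sum_odd {A : Type*} [Ring A] (s : Finset ℤ)
    (f : ℤ → A) :
    ∑ k ∈ s, (((-1) ^ k : Aˣ) : A) * f k
      = ∑ k ∈ s with Even k, f k - ∑ k ∈ s with Odd k, f k := by
  rw [← sum_filter_add_sum_filter_not s Even, sub_eq_add_neg, ← sum_neg_distrib]
  congr 1
  · refine sum_congr rfl fun k hk => ?_
    rw [(mem_filter.mp hk).2.neg_one_zpow, Units.val_one, one_mul]
  · refine sum_congr (filter_congr fun k _ => Int.not_even_iff_odd) fun k hk => ?_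
    rw [(mem_filter.mp hk).2.neg_one_zpow, Units.val_neg, Units.val_one, neg_one_mul]

theorem bipartitionNumber_eq_sum_antidiagonal (d : ℕ) :
    bipartitionNumber d = ∑ ij ∈ antidiagonal d, partitionNumber ij.1 * partitionNumber ij.2 := by
  let e : {x : (Σ a : ℕ, Nat.Partition a) × (Σ b : ℕ, Nat.Partition b) // x.1.1 + x.2.1 = d}
      ≃ Σ ij : antidiagonal d, Nat.Partition ij.1.1 × Nat.Partition ij.1.2 :=
    { toFun := fun x => ⟨⟨(x.1.1.1, x.1.2.1), mem_antidiagonal.mpr x.2⟩, (x.1.1.2, x.1.2.2)⟩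
      invFun := fun y => ⟨(⟨_, y.2.1⟩, ⟨_, y.2.2⟩), mem_antidiagonal.mp y.1.2⟩
      left_inv := fun _ => rfl
      right_inv := fun _ => rfl }
  rw [bipartitionNumber, Nat.card_congr e, Nat.card_eq_fintype_card, Fintype.card_sigma,
    ← sum_coe_sort (antidiagonal d)]
  simp [partitionNumber, Nat.card_eq_fintype_card]

theorem coeff_partitionSeries (n : ℕ) : coeff n partitionSeries = partitionNumber n :=
  coeff_mk _ _

theorem coeff_partitionSeries_sq (d : ℕ) :
    coeff d (partitionSeries ^ 2) = (bipartitionNumber d : ℤ) := by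
  rw [sq, coeff_mul, bipartitionNumber_eq_sum_antidiagonal]
  push_cast
  simp only [coeff_partitionSeries]

theorem bipartitionNumberZ_natCast_sub (n j : ℕ) :
    bipartitionNumberZ (n - j) = if j ≤ n then (bipartitionNumber (n - j) : ℤ) else 0 := by
  unfold bipartitionNumberZ
  split_ifs <;> first | omega | congr; omega

theorem coeff_X_pow_mul_partitionSeries_sq (n : ℕ) (k : ℤ) :
    coeff n ((X : ℤ⟦X⟧) ^ k.natAbs ^ 2 * partitionSeries ^ 2) = bipartitionNumberZ (n - k ^ 2) := by
  rw [coeff_X_pow_mul', ← Int.natAbs_sq, ← Int.natCast_pow, bipartitionNumberZ_natCast_sub,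
    coeff_partitionSeries_sq]

/-- `∑_{k ∈ ℤ even} p₂(n - k²) - ∑_{k ∈ ℤ odd} p₂(n - k²) = p(n/2)`, where `p₂(m) = 0` for
`m < 0` and `p(n/2)` is interpreted as `0` for odd `n`.  The sums are restricted to
`-n ≤ k ≤ n`, which loses nothing since `p₂(n - k²) = 0` once `k² > n`. -/
theorem sum_even_sub_sum_odd_bipartitionNumber (n : ℕ) :
    (∑ k ∈ (Finset.Icc (-(n : ℤ)) (n : ℤ)).filter (fun k => Even k),
        bipartitionNumberZ ((n : ℤ) - k ^ 2)) -
      (∑ k ∈ (Finset.Icc (-(n : ℤ)) (n : ℤ)).filter (fun k => Odd k),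
        bipartitionNumberZ ((n : ℤ) - k ^ 2)) =
      if 2 ∣ n then (partitionNumber (n / 2) : ℤ) else 0 := by
  have h := coeff_eq_of_smodEq (truncatedTheta_mul_partitionSeries_sq_smodEq n)
    (by omega : n < 2 * n + 1)
  rw [truncatedTheta, sum_neg_one_zpow_mul_eq_sum_even_sub_sum_odd, sub_mul, sum_mul, sum_mul,
    map_sub, map_sum, map_sum, coeff_expand, coeff_partitionSeries] at h
  simpa only [coeff_X_pow_mul_partitionSeries_sq] using h
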